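/- arXiv:1804.01395 — 3 statements merged into one kernel-verified Lean document; each statement's English description precedes it below -/
import Mathlib

section
/- Let C ⊂ (ℂ*)² be the smooth part of the zero set of P ∈ ℂ[X^{±1},Y^{±1}], μ(x,y) = (log|x|, log|y|) the amoeba map, and γ(x,y) = [x ∂_x P(x,y) : y ∂_y P(x,y)] ∈ ℙ¹(ℂ) the logarithmic Gauss map. Then for z ∈ C, the differential d_z μ (as a real-linear map from the real 2-dimensional tangent space T_z C to ℝ²) is non-invertible if and only if γ(z) ∈ ℙ¹(ℝ). -/
open MvPolynomial

/-!
In logarithmic coordinates `d_zμ` is `(u, v) ↦ (Re u, Re v)` on `T_zC = {A u + B v = 0}`, so its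
kernel consists of the tangent vectors `(a i, b i)` with `a, b` real and `A a + B b = 0`. A nonzero
such `(a, b)` exists exactly when `[A : B] = [-b : a]` has real homogeneous coordinates.
-/

namespace Complex

lemma eq_im_mul_I_of_re_eq_zero {u : ℂ} (hu : u.re = 0) : u = u.im * I := by
  simpa [hu] using (re_add_im u).symm

lemma exists_ne_zero_re_eq_zero_iff_exists_real (A B : ℂ) :
    (∃ u v : ℂ, (u, v) ≠ (0, 0) ∧ A * u + B * v = 0 ∧ u.re = 0 ∧ v.re = 0) ↔
      ∃ a b : ℝ, (a, b) ≠ (0, 0) ∧ A * a + B * b = 0 := by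
  constructor
  · rintro ⟨u, v, hne, hker, hu, hv⟩
    rw [eq_im_mul_I_of_re_eq_zero hu, eq_im_mul_I_of_re_eq_zero hv] at hne hker
    refine ⟨u.im, v.im, fun h => hne ?_, ?_⟩
    · simp_all
    · linear_combination -I * hker + (A * u.im + B * v.im) * I_sq
  · rintro ⟨a, b, hne, hker⟩
    refine ⟨a * I, b * I, fun h => hne ?_, by linear_combination I * hker, by simp, by simp⟩
    simp_all

lemma exists_real_kernel_iff_exists_real_proportional (A B : ℂ) :
    (∃ a b : ℝ, (a, b) ≠ (0, 0) ∧ A * a + B * b = 0) ↔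
      ∃ s t : ℝ, (s, t) ≠ (0, 0) ∧ A * (t : ℂ) = B * (s : ℂ) := by
  constructor
  · rintro ⟨a, b, hne, hker⟩
    refine ⟨-b, a, fun h => hne ?_, ?_⟩
    · simp_all
    · push_cast
      linear_combination hker
  · rintro ⟨s, t, hne, hprop⟩
    refine ⟨t, -s, fun h => hne ?_, ?_⟩
    · simp_all
    · push_cast
      linear_combination hprop

end Complex

theorem amoeba_differential_noninvertible_iff_gauss_real_general
    (A B : ℂ) :
    (∃ u v : ℂ, (u, v) ≠ (0, 0) ∧ A * u + B * v = 0 ∧ u.re = 0 ∧ v.re = 0)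
      ↔ (∃ s t : ℝ, (s, t) ≠ (0, 0) ∧ A * (t : ℂ) = B * (s : ℂ)) :=
  (Complex.exists_ne_zero_re_eq_zero_iff_exists_real A B).trans
    (Complex.exists_real_kernel_iff_exists_real_proportional A B)

/-- Let `z` be a smooth point of the zero set of `P` in `(ℂ*)²`, with
`A = x ∂ₓP(z)`, `B = y ∂_yP(z)`. In logarithmic coordinates the tangent space is
`T_zC = {(u,v) : A u + B v = 0}` and the differential of the amoeba map
`μ(x,y) = (log|x|, log|y|)` is `(u,v) ↦ (Re u, Re v)`. Then `d_zμ` is non-invertible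
(i.e. has nontrivial kernel on the 2-real-dimensional space `T_zC`) if and only if the
logarithmic Gauss map value `γ(z) = [A : B]` lies in `ℙ¹(ℝ)` (i.e. `[A : B]` admits a
representative with real homogeneous coordinates). -/
theorem amoeba_differential_noninvertible_iff_gauss_real
    (P : MvPolynomial (Fin 2) ℂ) (z : ℂ × ℂ) (hz1 : z.1 ≠ 0) (hz2 : z.2 ≠ 0)
    (hz : eval ![z.1, z.2] P = 0)
    (A B : ℂ)
    (hA : A = z.1 * eval ![z.1, z.2] (pderiv 0 P))
    (hB : B = z.2 * eval ![z.1, z.2] (pderiv 1 P))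
    (hsm : ¬ (A = 0 ∧ B = 0)) :
    (∃ u v : ℂ, (u, v) ≠ (0, 0) ∧ A * u + B * v = 0 ∧ u.re = 0 ∧ v.re = 0)
      ↔ (∃ s t : ℝ, (s, t) ≠ (0, 0) ∧ A * (t : ℂ) = B * (s : ℂ)) :=
  amoeba_differential_noninvertible_iff_gauss_real_general A B
end

section
/- A point (x,y) ∈ C is a zero of the 1-form η restricted to C (equivalently a critical point of any volume function V) if and only if log|x| · x ∂_x P(x,y) + log|y| · y ∂_y P(x,y) = 0. -/
open MvPolynomial

/-!
Over a field, the solutions of `A u + B v = 0` with `(A, B) ≠ 0` are exactly the multiples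
`(t B, -t A)`. On such a tangent vector `η` takes the value `Im (t (log|x| A + log|y| B))`,
and `Im (t c)` vanishes for every complex `t` only when `c = 0`.
-/

theorem exists_eq_mul_of_mul_add_mul_eq_zero {K : Type*} [Field K] {A B u v : K}
    (hAB : A ≠ 0 ∨ B ≠ 0) (h : A * u + B * v = 0) : ∃ t, u = t * B ∧ v = -(t * A) := by
  rcases hAB with hA | hB
  · refine ⟨-v / A, ?_, by field_simp⟩
    field_simp
    linear_combination h
  · refine ⟨u / B, by field_simp, ?_⟩
    field_simp
    linear_combination h

theorem forall_mul_add_mul_eq_zero_imp_iff {K : Type*} [Field K] {A B : K}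
    (hAB : A ≠ 0 ∨ B ≠ 0) (p : K → K → Prop) :
    (∀ u v, A * u + B * v = 0 → p u v) ↔ ∀ t, p (t * B) (-(t * A)) := by
  refine ⟨fun h t => h _ _ (by ring), fun h u v huv => ?_⟩
  obtain ⟨t, rfl, rfl⟩ := exists_eq_mul_of_mul_add_mul_eq_zero hAB huv
  exact h t

theorem Complex.forall_im_mul_eq_zero_iff {c : ℂ} : (∀ t : ℂ, (t * c).im = 0) ↔ c = 0 := by
  refine ⟨fun h => Complex.ext ?_ ?_, fun h t => by simp [h]⟩
  · simpa using h Complex.I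
  · simpa using h 1

theorem critical_point_iff_general
    (z : ℂ × ℂ)
    (A B : ℂ)
    (hsm : ¬ (A = 0 ∧ B = 0)) :
    (∀ u v : ℂ, A * u + B * v = 0 →
        Real.log (‖z.2‖) * u.im - Real.log (‖z.1‖) * v.im = 0)
      ↔ (Real.log (‖z.1‖) : ℂ) * A + (Real.log (‖z.2‖) : ℂ) * B = 0 := by
  rw [forall_mul_add_mul_eq_zero_imp_iff (not_and_or.mp hsm), ← Complex.forall_im_mul_eq_zero_iff]
  refine forall_congr' fun t => Eq.congr_left ?_
  simp only [mul_add, Complex.add_im, Complex.neg_im, mul_left_comm t, Complex.im_ofReal_mul]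
  ring

/-- A smooth point `z = (x,y)` of `{P=0} ⊂ (ℂ*)²` is a zero of the restriction of
`η = log|y| d(arg x) − log|x| d(arg y)` to the curve (equivalently, a critical point of
any volume function) if and only if
`log|x| · x∂ₓP(z) + log|y| · y∂_yP(z) = 0`. Here, in logarithmic coordinates, the tangent
space is `{(u,v) : A u + B v = 0}` and `η(u,v) = log|y| Im u − log|x| Im v`. -/
theorem critical_point_iff
    (P : MvPolynomial (Fin 2) ℂ) (z : ℂ × ℂ) (hz1 : z.1 ≠ 0) (hz2 : z.2 ≠ 0)
    (hz : eval ![z.1, z.2] P = 0)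
    (A B : ℂ)
    (hA : A = z.1 * eval ![z.1, z.2] (pderiv 0 P))
    (hB : B = z.2 * eval ![z.1, z.2] (pderiv 1 P))
    (hsm : ¬ (A = 0 ∧ B = 0)) :
    (∀ u v : ℂ, A * u + B * v = 0 →
        Real.log (‖z.2‖) * u.im - Real.log (‖z.1‖) * v.im = 0)
      ↔ (Real.log (‖z.1‖) : ℂ) * A + (Real.log (‖z.2‖) : ℂ) * B = 0 :=
  critical_point_iff_general z A B hsm
end

section
/- Let z be an ideal point of the smooth projective model Ĉ of the curve {P=0}, with Newton–Puiseux local coordinate x = t^p, y = t^q F(t) (p,q coprime, F(0) ≠ 0). Then the integral of η over a small positively-oriented circle C_ρ of radius ρ around z tends to 2π p log|F(0)| = 2π log|{x,y}_z| as ρ → 0. In particular η is exact in a punctured neighborhood of z with a continuous extension to z if and only if |{x,y}_z| = 1. -/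
/-!
On the circle `|t| = ρ` the monomial parts of `x = t^p` and `y = t^q F(t)` cancel and `η` becomes
`p log|F(t)| dθ - p log ρ · Re(t F'(t)/F(t)) dθ`. Once `ρ` is so small that `F` has no zeros on the
closed disc, `log|F|` is harmonic there and averages to `log|F(0)|`, while `t F'/F` is holomorphic
and vanishes at `0`, so it averages to `0`. The period is thus `2π p log|F(0)|` for all small `ρ`.
-/

/-- `η = log|y| d(arg x) − log|x| d(arg y)` as a continuous `ℝ`-linear functional. -/
noncomputable def etaL (p : ℂ × ℂ) : (ℂ × ℂ) →L[ℝ] ℝ :=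
  Real.log (norm p.2) •
      (Complex.imCLM.comp ((p.1⁻¹ • ContinuousLinearMap.fst ℂ ℂ ℂ).restrictScalars ℝ)) -
    Real.log (norm p.1) •
      (Complex.imCLM.comp ((p.2⁻¹ • ContinuousLinearMap.snd ℂ ℂ ℂ).restrictScalars ℝ))

open Real Metric Filter Topology

lemma etaL_apply (x y v w : ℂ) :
    etaL (x, y) (v, w) = Real.log ‖y‖ * (x⁻¹ * v).im - Real.log ‖x‖ * (y⁻¹ * w).im := by
  simp [etaL, smul_eq_mul]

lemma etaL_zpow_zpow_mul {t f f' : ℂ} (ht : t ≠ 0) (hf : f ≠ 0) (p q : ℤ) :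
    etaL (t ^ p, t ^ q * f) (p * t ^ p * Complex.I, (q * f + t * f') * t ^ q * Complex.I) =
      p * Real.log ‖f‖ - p * Real.log ‖t‖ * (t * f' / f).re := by
  have hx : (t ^ p)⁻¹ * (p * t ^ p * Complex.I) = p * Complex.I := by
    field_simp [zpow_ne_zero p ht]
  have hy : (t ^ q * f)⁻¹ * ((q * f + t * f') * t ^ q * Complex.I) =
      (q + t * f' / f) * Complex.I := by
    field_simp [zpow_ne_zero q ht]
  rw [etaL_apply, hx, hy, norm_mul, norm_zpow, norm_zpow,
    Real.log_mul (zpow_ne_zero q (norm_ne_zero_iff.2 ht)) (norm_ne_zero_iff.2 hf),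
    Real.log_zpow, Real.log_zpow]
  simp only [Complex.mul_I_im, Complex.add_re, Complex.intCast_re]
  ring

section CircleAverage

variable {F : ℂ → ℂ} {ρ : ℝ}

lemma differentiableOn_mul_deriv_div {s : Set ℂ} (hF : AnalyticOnNhd ℂ F s)
    (hF0 : ∀ t ∈ s, F t ≠ 0) : DifferentiableOn ℂ (fun t => t * deriv F t / F t) s :=
  (differentiableOn_id.mul hF.deriv.differentiableOn).div hF.differentiableOn hF0

lemma circleAverage_re_mul_deriv_div_eq_zero (hF : AnalyticOnNhd ℂ F (closedBall 0 |ρ|))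
    (hF0 : ∀ t ∈ closedBall 0 |ρ|, F t ≠ 0) :
    circleAverage (fun t => (t * deriv F t / F t).re) 0 ρ = 0 := by
  have hg := differentiableOn_mul_deriv_div hF hF0
  have hint : CircleIntegrable (fun t => t * deriv F t / F t) 0 ρ :=
    (hg.continuousOn.mono sphere_subset_closedBall).circleIntegrable'
  rw [show (fun t => (t * deriv F t / F t).re) = Complex.reCLM ∘ fun t => t * deriv F t / F t
    from rfl, Complex.reCLM.circleAverage_comp_comm hint,
    (hg.diffContOnCl_ball subset_rfl).circleAverage]
  simp

lemma circleAverage_log_norm_sub_re_mul_deriv_div (p : ℝ)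
    (hF : AnalyticOnNhd ℂ F (closedBall 0 |ρ|)) (hF0 : ∀ t ∈ closedBall 0 |ρ|, F t ≠ 0) :
    circleAverage
        (fun t => p * Real.log ‖F t‖ - p * Real.log |ρ| * (t * deriv F t / F t).re) 0 ρ =
      p * Real.log ‖F 0‖ := by
  have hlog : CircleIntegrable (fun t => p * Real.log ‖F t‖) 0 ρ := by
    refine ContinuousOn.circleIntegrable' fun t ht => ?_
    have hFt := hF0 t (sphere_subset_closedBall ht)
    exact ((hF t (sphere_subset_closedBall ht)).continuousAt.norm.log
      (norm_ne_zero_iff.2 hFt)).continuousWithinAt.const_mul p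
  have hre : CircleIntegrable (fun t => p * Real.log |ρ| * (t * deriv F t / F t).re) 0 ρ := by
    refine ContinuousOn.circleIntegrable' (continuousOn_const.mul ?_)
    exact Complex.continuous_re.comp_continuousOn
      ((differentiableOn_mul_deriv_div hF hF0).continuousOn.mono sphere_subset_closedBall)
  rw [circleAverage_fun_sub hlog hre]
  simp_rw [← smul_eq_mul (a := p * Real.log |ρ|), ← smul_eq_mul (a := p)]
  rw [circleAverage_fun_smul, circleAverage_fun_smul,
    circleAverage_re_mul_deriv_div_eq_zero hF hF0, hF.circleAverage_log_norm_of_ne_zero hF0]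
  simp

lemma integral_etaL_puiseux_circle (p q : ℤ) (hρ : 0 < ρ)
    (hF : AnalyticOnNhd ℂ F (closedBall 0 ρ)) (hF0 : ∀ t ∈ closedBall 0 ρ, F t ≠ 0) :
    ∫ θ in (0 : ℝ)..(2 * π),
        etaL (circleMap 0 ρ θ ^ p, circleMap 0 ρ θ ^ q * F (circleMap 0 ρ θ))
          (p * circleMap 0 ρ θ ^ p * Complex.I,
            (q * F (circleMap 0 ρ θ) + circleMap 0 ρ θ * deriv F (circleMap 0 ρ θ)) *
              circleMap 0 ρ θ ^ q * Complex.I) =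
      2 * π * p * Real.log ‖F 0‖ := by
  rw [← abs_of_pos hρ] at hF hF0
  have hmem (θ : ℝ) : circleMap 0 ρ θ ∈ closedBall 0 |ρ| :=
    sphere_subset_closedBall (circleMap_mem_sphere' 0 ρ θ)
  calc _ = ∫ θ in (0 : ℝ)..(2 * π), (fun t => (p : ℝ) * Real.log ‖F t‖ -
        p * Real.log |ρ| * (t * deriv F t / F t).re) (circleMap 0 ρ θ) := by
        refine intervalIntegral.integral_congr fun θ _ => ?_
        rw [etaL_zpow_zpow_mul (circleMap_ne_center hρ.ne') (hF0 _ (hmem θ)),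
          norm_circleMap_zero]
    _ = 2 * π * circleAverage (fun t => (p : ℝ) * Real.log ‖F t‖ -
        p * Real.log |ρ| * (t * deriv F t / F t).re) 0 ρ := by
        rw [circleAverage_def, smul_eq_mul, mul_inv_cancel_left₀ two_pi_pos.ne']
    _ = 2 * π * p * Real.log ‖F 0‖ := by
        rw [circleAverage_log_norm_sub_re_mul_deriv_div p hF hF0]
        ring

end CircleAverage

lemma norm_neg_one_zpow_mul_zpow_neg_eq_one_iff {a : ℂ} (ha : a ≠ 0) (p q : ℤ) :
    ‖(-1 : ℂ) ^ (p * q) * a ^ (-p)‖ = 1 ↔ p * Real.log ‖a‖ = 0 := by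
  have hpos : 0 < ‖a‖ ^ (-p) := zpow_pos (norm_pos_iff.2 ha) _
  rw [norm_mul, norm_zpow, norm_zpow, norm_neg, norm_one, one_zpow, one_mul,
    ← Real.exp_log hpos, Real.exp_eq_one_iff, Real.log_zpow]
  push_cast
  constructor <;> intro h <;> linarith

/-- Near an ideal point with Newton–Puiseux coordinates `x = t^p`, `y = t^q F(t)`
(`F(0) ≠ 0`), the integral of `η` over the positively oriented circle of radius `ρ`
tends to `2π p log|F(0)|` as `ρ → 0⁺`. In particular this period vanishes (so `η` is
exact near the ideal point, with a continuous extension of its primitive) if and only if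
the tame symbol `{x,y}_z = (−1)^{pq} F(0)^{−p}` has modulus `1`. -/
theorem eta_circle_period (p q : ℤ) (F : ℂ → ℂ) (r : ℝ) (hr : 0 < r)
    (hF : ∀ t ∈ Metric.ball (0 : ℂ) r, AnalyticAt ℂ F t) (hF0 : F 0 ≠ 0) :
    Filter.Tendsto (fun ρ : ℝ =>
        ∫ θ in (0 : ℝ)..(2 * Real.pi),
          etaL (((ρ : ℂ) * Complex.exp (θ * Complex.I)) ^ p,
                ((ρ : ℂ) * Complex.exp (θ * Complex.I)) ^ q
                  * F ((ρ : ℂ) * Complex.exp (θ * Complex.I)))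
            ((p : ℂ) * ((ρ : ℂ) * Complex.exp (θ * Complex.I)) ^ p * Complex.I,
             ((q : ℂ) * F ((ρ : ℂ) * Complex.exp (θ * Complex.I))
                + ((ρ : ℂ) * Complex.exp (θ * Complex.I))
                  * deriv F ((ρ : ℂ) * Complex.exp (θ * Complex.I)))
               * ((ρ : ℂ) * Complex.exp (θ * Complex.I)) ^ q * Complex.I))
      (nhdsWithin 0 (Set.Ioo 0 r))
      (nhds (2 * Real.pi * p * Real.log (norm (F 0)))) ∧
    ((2 * Real.pi * p * Real.log (norm (F 0)) = 0) ↔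
      norm ((-1 : ℂ) ^ (p * q) * F 0 ^ (-p)) = 1) := by
  have hgood : ball 0 r ∩ {t | F t ≠ 0} ∈ 𝓝 (0 : ℂ) :=
    inter_mem (ball_mem_nhds 0 hr) ((hF 0 (mem_ball_self hr)).continuousAt.eventually_ne hF0)
  simp_rw [← circleMap_zero]
  refine ⟨tendsto_const_nhds.congr' ?_, ?_⟩
  · filter_upwards [nhdsWithin_le_nhds (eventually_closedBall_subset hgood),
      self_mem_nhdsWithin] with ρ hsub hρ
    exact (integral_etaL_puiseux_circle p q hρ.1 (fun t ht => hF t (hsub ht).1)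
      fun t ht => (hsub ht).2).symm
  · rw [norm_neg_one_zpow_mul_zpow_neg_eq_one_iff hF0, mul_assoc, mul_eq_zero,
      or_iff_right two_pi_pos.ne']
end
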